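/- Let 1 < d₁ < 2 < d₂ and let d₁' = d₁/(d₁−1). Consider the integral operator T f(x) = ∫₁^∞ K(x,y) f(y) y^{d₁−1} dy with kernel K(x,y) = x^{1−d₂} y^{−1} for 1 ≤ x ≤ y and K(x,y) = x^{−d₂} for x > y ≥ 1. Then for every p with 1 < p < d₁' there exists a constant C > 0 such that ‖Tf‖_{L^p([1,∞), μ_{d₂})} ≤ C ‖f‖_{L^p([1,∞), μ_{d₁})} for all f ∈ L^p([1,∞), μ_{d₁}). -/

import Mathlib

/-!
Schur test with power weights. If `q` is the exponent conjugate to `p` and the kernel satisfies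
`∫ K(x,y) y^{-β} dμ_{d₁}(y) ≤ A x^{-β}` and `∫ K(x,y) x^{-β(p-1)} dμ_{d₂}(x) ≤ B y^{-β(p-1)}`,
then Hölder's inequality with the weight `t^{-β/q}` followed by Tonelli gives
`‖Tf‖_p^p ≤ A^{p-1} B ‖f‖_p^p`. Splitting each integral at `x = y`, the first bound holds for
`d₁ - 1 < β < d₁` (using `d₁ ≤ d₂`) and the second for `0 < β(p-1) < 1`; such a `β` exists exactly
when `p < d₁'`.
-/

open MeasureTheory Set

/-- The measure on `[1,∞)` with density `r ^ (n-1)` with respect to Lebesgue measure. -/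
noncomputable def mu (n : ℝ) : Measure ℝ :=
  (volume.restrict (Ici (1 : ℝ))).withDensity fun r => ENNReal.ofReal (r ^ (n - 1))

open scoped ENNReal

section SchurTest

variable {X Y : Type*} [MeasurableSpace X] [MeasurableSpace Y]

theorem rpow_lintegral_mul_le_weighted {ν : Measure Y} {p q : ℝ} (hpq : p.HolderConjugate q)
    {k φ g : Y → ℝ≥0∞} (hk : AEMeasurable k ν) (hφ : AEMeasurable φ ν) (hg : AEMeasurable g ν)
    (hφ0 : ∀ᵐ y ∂ν, φ y ≠ 0) (hφtop : ∀ᵐ y ∂ν, φ y ≠ ∞) :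
    (∫⁻ y, k y * g y ∂ν) ^ p ≤
      (∫⁻ y, k y * φ y ^ q ∂ν) ^ (p - 1) * ∫⁻ y, k y * (g y / φ y) ^ p ∂ν := by
  have hp := hpq.pos
  have hq := hpq.symm.pos
  have hsplit : ∫⁻ y, k y * g y ∂ν =
      ∫⁻ y, (k y ^ q⁻¹ * φ y) * (k y ^ p⁻¹ * (g y / φ y)) ∂ν := by
    refine lintegral_congr_ae ?_
    filter_upwards [hφ0, hφtop] with y h0 htop
    rw [mul_mul_mul_comm, ← ENNReal.rpow_add_of_nonneg _ _ (by positivity) (by positivity),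
      add_comm, hpq.inv_add_inv_eq_one, ENNReal.rpow_one, ENNReal.mul_div_cancel h0 htop]
  have hpow : ∀ {r : ℝ} (a b : ℝ≥0∞), 0 < r → (a ^ r⁻¹ * b) ^ r = a * b ^ r := fun a b hr => by
    rw [ENNReal.mul_rpow_of_nonneg _ _ hr.le, ← ENNReal.rpow_mul, inv_mul_cancel₀ hr.ne',
      ENNReal.rpow_one]
  have holder := ENNReal.lintegral_mul_le_Lp_mul_Lq ν hpq.symm
    (f := fun y => k y ^ q⁻¹ * φ y) (g := fun y => k y ^ p⁻¹ * (g y / φ y))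
    (by fun_prop) (by fun_prop)
  simp only [Pi.mul_apply, hpow _ _ hp, hpow _ _ hq] at holder
  calc (∫⁻ y, k y * g y ∂ν) ^ p
      ≤ ((∫⁻ y, k y * φ y ^ q ∂ν) ^ (1 / q) * (∫⁻ y, k y * (g y / φ y) ^ p ∂ν) ^ (1 / p)) ^ p := by
        rw [hsplit]; gcongr
    _ = _ := by
        rw [ENNReal.mul_rpow_of_nonneg _ _ hp.le, ← ENNReal.rpow_mul, ← ENNReal.rpow_mul,
          one_div_mul_eq_div, hpq.div_conj_eq_sub_one, one_div_mul_cancel hp.ne', ENNReal.rpow_one]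

theorem lintegral_rpow_lintegral_le_of_schur {μ : Measure X} {ν : Measure Y} [SFinite μ] [SFinite ν]
    {p q : ℝ} (hpq : p.HolderConjugate q) {K : X → Y → ℝ≥0∞} (hK : Measurable (Function.uncurry K))
    {φ : Y → ℝ≥0∞} {ψ : X → ℝ≥0∞} (hφ : Measurable φ) (hψ : Measurable ψ)
    (hφ0 : ∀ᵐ y ∂ν, φ y ≠ 0) (hφtop : ∀ᵐ y ∂ν, φ y ≠ ∞) {A B : ℝ≥0∞}
    (hA : ∀ᵐ x ∂μ, ∫⁻ y, K x y * φ y ^ q ∂ν ≤ A * ψ x ^ q)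
    (hB : ∀ᵐ y ∂ν, ∫⁻ x, K x y * ψ x ^ p ∂μ ≤ B * φ y ^ p)
    {g : Y → ℝ≥0∞} (hg : AEMeasurable g ν) :
    ∫⁻ x, (∫⁻ y, K x y * g y ∂ν) ^ p ∂μ ≤ A ^ (p - 1) * B * ∫⁻ y, g y ^ p ∂ν := by
  have hp1 : 0 ≤ p - 1 := hpq.sub_one_pos.le
  have hKx : ∀ x, Measurable (K x) := fun x => hK.of_uncurry_left
  have hKy : ∀ y, Measurable fun x => K x y := fun y => hK.of_uncurry_right
  set h : Y → ℝ≥0∞ := fun y => (g y / φ y) ^ p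
  have hh : AEMeasurable h ν := by fun_prop
  have hKh : AEMeasurable (Function.uncurry fun x y => ψ x ^ p * (K x y * h y)) (μ.prod ν) :=
    (hψ.comp measurable_fst).pow_const p |>.aemeasurable.mul (hK.aemeasurable.mul hh.comp_snd)
  calc ∫⁻ x, (∫⁻ y, K x y * g y ∂ν) ^ p ∂μ
      ≤ ∫⁻ x, (A * ψ x ^ q) ^ (p - 1) * ∫⁻ y, K x y * h y ∂ν ∂μ := by
        refine lintegral_mono_ae ?_
        filter_upwards [hA] with x hx
        exact (rpow_lintegral_mul_le_weighted hpq (hKx x).aemeasurable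
          hφ.aemeasurable hg hφ0 hφtop).trans (by gcongr)
    _ = A ^ (p - 1) * ∫⁻ x, ∫⁻ y, ψ x ^ p * (K x y * h y) ∂ν ∂μ := by
        rw [← lintegral_const_mul'' _ hKh.lintegral_prod_right]
        refine lintegral_congr fun x => ?_
        rw [lintegral_const_mul'' (f := fun y => K x y * h y) _ (by fun_prop),
          ENNReal.mul_rpow_of_nonneg _ _ hp1, ← ENNReal.rpow_mul, mul_comm q,
          hpq.sub_one_mul_conj, mul_assoc]
    _ = A ^ (p - 1) * ∫⁻ y, h y * ∫⁻ x, K x y * ψ x ^ p ∂μ ∂ν := by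
        rw [lintegral_lintegral_swap hKh]
        congr 1
        refine lintegral_congr fun y => ?_
        rw [← lintegral_const_mul (f := fun x => K x y * ψ x ^ p) _ (by fun_prop)]
        exact lintegral_congr fun x => by ring
    _ ≤ A ^ (p - 1) * ∫⁻ y, h y * (B * φ y ^ p) ∂ν := by
        gcongr A ^ (p - 1) * ?_
        exact lintegral_mono_ae (hB.mono fun y hy => by gcongr)
    _ = A ^ (p - 1) * B * ∫⁻ y, g y ^ p ∂ν := by
        rw [mul_assoc, ← lintegral_const_mul'' B (hg.pow_const p)]
        congr 1
        refine lintegral_congr_ae ?_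
        filter_upwards [hφ0, hφtop] with y h0 htop
        rw [mul_left_comm, ← ENNReal.mul_rpow_of_nonneg _ _ hpq.nonneg,
          ENNReal.div_mul_cancel h0 htop]

end SchurTest

lemma lintegral_Ioc_zero_ofReal_mul_rpow {a c t : ℝ} (ha : 0 ≤ a) (hc : 0 < c) (ht : 0 ≤ t) :
    ∫⁻ y in Ioc 0 t, ENNReal.ofReal (a * y ^ (c - 1)) = ENNReal.ofReal (a * (t ^ c / c)) := by
  have hint : IntegrableOn (fun y : ℝ => a * y ^ (c - 1)) (Ioc 0 t) := by
    refine Integrable.const_mul ?_ a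
    exact (intervalIntegrable_iff_integrableOn_Ioc_of_le ht).mp
      (intervalIntegral.intervalIntegrable_rpow' (by linarith))
  rw [← ofReal_integral_eq_lintegral_ofReal hint, integral_const_mul,
    ← intervalIntegral.integral_of_le ht, integral_rpow (Or.inl (by linarith)), sub_add_cancel,
    Real.zero_rpow hc.ne', sub_zero]
  filter_upwards [ae_restrict_mem measurableSet_Ioc] with y hy
  exact mul_nonneg ha (Real.rpow_nonneg hy.1.le _)

lemma lintegral_Ioi_ofReal_mul_rpow {a c t : ℝ} (ha : 0 ≤ a) (hc : c < 0) (ht : 0 < t) :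
    ∫⁻ y in Ioi t, ENNReal.ofReal (a * y ^ (c - 1)) = ENNReal.ofReal (a * (t ^ c / -c)) := by
  have hc' : c - 1 < -1 := by linarith
  rw [← ofReal_integral_eq_lintegral_ofReal ((integrableOn_Ioi_rpow_of_lt hc' ht).const_mul a),
    integral_const_mul, integral_Ioi_rpow_of_lt hc' ht, sub_add_cancel, neg_div, div_neg]
  filter_upwards [ae_restrict_mem measurableSet_Ioi] with y hy
  exact mul_nonneg ha (Real.rpow_nonneg (ht.trans hy).le _)

instance (n : ℝ) : SFinite (mu n) := by
  unfold mu
  infer_instance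

lemma lintegral_mu (n : ℝ) (g : ℝ → ℝ≥0∞) :
    ∫⁻ t, g t ∂mu n = ∫⁻ t in Ici 1, ENNReal.ofReal (t ^ (n - 1)) * g t :=
  lintegral_withDensity_eq_lintegral_mul_non_measurable _ (by fun_prop)
    (ae_of_all _ fun _ => ENNReal.ofReal_lt_top) g

lemma ae_one_le_mu (n : ℝ) : ∀ᵐ t ∂mu n, 1 ≤ t :=
  (withDensity_absolutelyContinuous _ _).ae_le (ae_restrict_mem measurableSet_Ici)

lemma lintegral_mu_congr {n : ℝ} {f g : ℝ → ℝ≥0∞} (h : ∀ t, 1 ≤ t → f t = g t) :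
    ∫⁻ t, f t ∂mu n = ∫⁻ t, g t ∂mu n :=
  lintegral_congr_ae ((ae_one_le_mu n).mono h)

lemma enorm_setIntegral_Ici_le_lintegral_mu (n : ℝ) (k f : ℝ → ℝ) :
    ‖∫ y in Ici (1 : ℝ), k y * f y * y ^ (n - 1)‖ₑ ≤ ∫⁻ y, ‖k y‖ₑ * ‖f y‖ₑ ∂mu n := by
  rw [lintegral_mu]
  refine (enorm_integral_le_lintegral_enorm _).trans_eq
    (setLIntegral_congr_fun measurableSet_Ici fun y hy => ?_)
  rw [enorm_mul, enorm_mul, Real.enorm_of_nonneg (Real.rpow_nonneg (zero_le_one.trans hy) _)]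
  ring

noncomputable def kernel (d x y : ℝ) : ℝ :=
  if x ≤ y then x ^ (1 - d) * y ^ (-1 : ℝ) else x ^ (-d)

lemma measurable_enorm_kernel (d : ℝ) :
    Measurable (Function.uncurry fun x y => ‖kernel d x y‖ₑ) :=
  (Measurable.ite (measurableSet_le measurable_fst measurable_snd) (by fun_prop)
    (by fun_prop)).enorm

lemma enorm_kernel_of_le {d x y : ℝ} (hx : 0 < x) (hxy : x ≤ y) :
    ‖kernel d x y‖ₑ = ENNReal.ofReal (x ^ (1 - d) * y ^ (-1 : ℝ)) := by
  rw [kernel, if_pos hxy, Real.enorm_of_nonneg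
    (mul_nonneg (Real.rpow_nonneg hx.le _) (Real.rpow_nonneg (hx.le.trans hxy) _))]

lemma enorm_kernel_of_lt {d x y : ℝ} (hx : 0 < x) (hyx : y < x) :
    ‖kernel d x y‖ₑ = ENNReal.ofReal (x ^ (-d)) := by
  rw [kernel, if_neg hyx.not_ge, Real.enorm_of_nonneg (by positivity)]

lemma lintegral_Ico_kernel_dy_le {d₁ d₂ β x : ℝ} (hd : d₁ ≤ d₂) (hβ : β < d₁) (hx : 1 ≤ x) :
    ∫⁻ y in Ico 1 x, ENNReal.ofReal (y ^ (d₁ - 1)) *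
        (‖kernel d₂ x y‖ₑ * ENNReal.ofReal (y ^ (-β))) ≤
      ENNReal.ofReal (1 / (d₁ - β) * x ^ (-β)) := by
  have hx0 : 0 < x := by linarith
  calc _ = ∫⁻ y in Ico 1 x, ENNReal.ofReal (x ^ (-d₂) * y ^ (d₁ - β - 1)) :=
        setLIntegral_congr_fun measurableSet_Ico fun y hy => by
          have hy0 : 0 < y := by linarith [hy.1]
          rw [enorm_kernel_of_lt hx0 hy.2, ← ENNReal.ofReal_mul (by positivity),
            ← ENNReal.ofReal_mul (by positivity),
            show d₁ - β - 1 = (d₁ - 1) + -β by ring, Real.rpow_add hy0]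
          ring_nf
    _ ≤ ∫⁻ y in Ioc 0 x, ENNReal.ofReal (x ^ (-d₂) * y ^ (d₁ - β - 1)) :=
        lintegral_mono_set fun y hy => ⟨by linarith [hy.1], hy.2.le⟩
    _ = ENNReal.ofReal (x ^ (-d₂) * (x ^ (d₁ - β) / (d₁ - β))) :=
        lintegral_Ioc_zero_ofReal_mul_rpow (by positivity) (by linarith) hx0.le
    _ ≤ _ := by
        refine ENNReal.ofReal_le_ofReal ?_
        rw [mul_div_assoc', ← Real.rpow_add hx0, one_div_mul_eq_div]
        gcongr
        linarith

lemma lintegral_Ici_kernel_dy_le {d₁ d₂ β x : ℝ} (hd : d₁ ≤ d₂) (hβ : d₁ - 1 < β) (hx : 1 ≤ x) :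
    ∫⁻ y in Ici x, ENNReal.ofReal (y ^ (d₁ - 1)) *
        (‖kernel d₂ x y‖ₑ * ENNReal.ofReal (y ^ (-β))) ≤
      ENNReal.ofReal (1 / (β - (d₁ - 1)) * x ^ (-β)) := by
  have hx0 : 0 < x := by linarith
  calc _ = ∫⁻ y in Ioi x, ENNReal.ofReal (x ^ (1 - d₂) * y ^ (d₁ - 1 - β - 1)) := by
        rw [← setLIntegral_congr Ioi_ae_eq_Ici]
        refine setLIntegral_congr_fun measurableSet_Ioi fun y hy => ?_
        have hy0 : 0 < y := hx0.trans hy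
        rw [enorm_kernel_of_le hx0 hy.le, ← ENNReal.ofReal_mul (by positivity),
          ← ENNReal.ofReal_mul (by positivity),
          show d₁ - 1 - β - 1 = (d₁ - 1) + -1 + -β by ring, Real.rpow_add hy0,
          Real.rpow_add hy0]
        ring_nf
    _ = ENNReal.ofReal (x ^ (1 - d₂) * (x ^ (d₁ - 1 - β) / -(d₁ - 1 - β))) :=
        lintegral_Ioi_ofReal_mul_rpow (by positivity) (by linarith) hx0
    _ ≤ _ := by
        refine ENNReal.ofReal_le_ofReal ?_
        rw [mul_div_assoc', ← Real.rpow_add hx0, one_div_mul_eq_div,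
          show -(d₁ - 1 - β) = β - (d₁ - 1) by ring]
        gcongr
        linarith

lemma lintegral_kernel_dy_le {d₁ d₂ β x : ℝ} (hd : d₁ ≤ d₂) (hβ₁ : d₁ - 1 < β) (hβ₂ : β < d₁)
    (hx : 1 ≤ x) :
    ∫⁻ y, ‖kernel d₂ x y‖ₑ * ENNReal.ofReal (y ^ (-β)) ∂mu d₁ ≤
      ENNReal.ofReal ((1 / (d₁ - β) + 1 / (β - (d₁ - 1))) * x ^ (-β)) := by
  have hc₁ : 0 < 1 / (d₁ - β) := one_div_pos.mpr (by linarith)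
  have hc₂ : 0 < 1 / (β - (d₁ - 1)) := one_div_pos.mpr (by linarith)
  rw [lintegral_mu, ← Ico_union_Ici_eq_Ici hx,
    lintegral_union measurableSet_Ici ((Iio_disjoint_Ici le_rfl).mono_left Ico_subset_Iio_self),
    add_mul, ENNReal.ofReal_add (by positivity) (by positivity)]
  exact add_le_add (lintegral_Ico_kernel_dy_le hd hβ₂ hx) (lintegral_Ici_kernel_dy_le hd hβ₁ hx)

lemma lintegral_Icc_kernel_dx_le {d₂ α y : ℝ} (hα : α < 1) (hy : 1 ≤ y) :
    ∫⁻ x in Icc 1 y, ENNReal.ofReal (x ^ (d₂ - 1)) *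
        (‖kernel d₂ x y‖ₑ * ENNReal.ofReal (x ^ (-α))) ≤
      ENNReal.ofReal (1 / (1 - α) * y ^ (-α)) := by
  have hy0 : 0 < y := by linarith
  calc _ = ∫⁻ x in Icc 1 y, ENNReal.ofReal (y ^ (-1 : ℝ) * x ^ (1 - α - 1)) :=
        setLIntegral_congr_fun measurableSet_Icc fun x hx => by
          have hx0 : 0 < x := by linarith [hx.1]
          rw [enorm_kernel_of_le hx0 hx.2, ← ENNReal.ofReal_mul (by positivity),
            ← ENNReal.ofReal_mul (by positivity),
            show 1 - α - 1 = (d₂ - 1) + (1 - d₂) + -α by ring, Real.rpow_add hx0,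
            Real.rpow_add hx0]
          ring_nf
    _ ≤ ∫⁻ x in Ioc 0 y, ENNReal.ofReal (y ^ (-1 : ℝ) * x ^ (1 - α - 1)) :=
        lintegral_mono_set fun x hx => ⟨by linarith [hx.1], hx.2⟩
    _ = ENNReal.ofReal (y ^ (-1 : ℝ) * (y ^ (1 - α) / (1 - α))) :=
        lintegral_Ioc_zero_ofReal_mul_rpow (by positivity) (by linarith) hy0.le
    _ = _ := by
        rw [mul_div_assoc', ← Real.rpow_add hy0, one_div_mul_eq_div]
        ring_nf

lemma lintegral_Ioi_kernel_dx_eq {d₂ α y : ℝ} (hα : 0 < α) (hy : 0 < y) :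
    ∫⁻ x in Ioi y, ENNReal.ofReal (x ^ (d₂ - 1)) *
        (‖kernel d₂ x y‖ₑ * ENNReal.ofReal (x ^ (-α))) =
      ENNReal.ofReal (1 / α * y ^ (-α)) :=
  calc _ = ∫⁻ x in Ioi y, ENNReal.ofReal (1 * x ^ (-α - 1)) :=
        setLIntegral_congr_fun measurableSet_Ioi fun x hx => by
          have hx0 : 0 < x := hy.trans hx
          rw [enorm_kernel_of_lt hx0 hx, ← ENNReal.ofReal_mul (by positivity),
            ← ENNReal.ofReal_mul (by positivity),
            show -α - 1 = (d₂ - 1) + -d₂ + -α by ring, Real.rpow_add hx0, Real.rpow_add hx0]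
          ring_nf
    _ = ENNReal.ofReal (1 * (y ^ (-α) / -(-α))) :=
        lintegral_Ioi_ofReal_mul_rpow zero_le_one (by linarith) hy
    _ = _ := by rw [neg_neg, one_mul, one_div_mul_eq_div]

lemma lintegral_kernel_dx_le {d₂ α y : ℝ} (hα₀ : 0 < α) (hα₁ : α < 1) (hy : 1 ≤ y) :
    ∫⁻ x, ‖kernel d₂ x y‖ₑ * ENNReal.ofReal (x ^ (-α)) ∂mu d₂ ≤
      ENNReal.ofReal ((1 / (1 - α) + 1 / α) * y ^ (-α)) := by
  have hc : 0 < 1 / (1 - α) := one_div_pos.mpr (by linarith)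
  rw [lintegral_mu, ← Icc_union_Ioi_eq_Ici hy,
    lintegral_union measurableSet_Ioi ((Iic_disjoint_Ioi le_rfl).mono_left Icc_subset_Iic_self),
    add_mul, ENNReal.ofReal_add (by positivity) (by positivity)]
  exact add_le_add (lintegral_Icc_kernel_dx_le hα₁ hy)
    (lintegral_Ioi_kernel_dx_eq hα₀ (by linarith)).le

lemma exists_schur_exponent {d₁ p : ℝ} (hd₁ : 1 < d₁) (hp : 1 < p) (hp' : p < d₁ / (d₁ - 1)) :
    ∃ β, d₁ - 1 < β ∧ β < d₁ ∧ 0 < β * (p - 1) ∧ β * (p - 1) < 1 := by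
  have hwindow : d₁ - 1 < min d₁ (1 / (p - 1)) := by
    refine lt_min (by linarith) ?_
    rw [lt_div_iff₀ (by linarith)] at hp' ⊢
    linarith
  obtain ⟨β, hβ₁, hβ₂⟩ := exists_between hwindow
  refine ⟨β, hβ₁, hβ₂.trans_le (min_le_left _ _), mul_pos (by linarith) (by linarith), ?_⟩
  exact (lt_div_iff₀ (by linarith)).mp (hβ₂.trans_le (min_le_right _ _))

lemma exists_lintegral_kernel_rpow_le {d₁ d₂ p : ℝ} (hd₁ : 1 < d₁) (hd : d₁ ≤ d₂) (hp : 1 < p)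
    (hp' : p < d₁ / (d₁ - 1)) :
    ∃ C > 0, ∀ g : ℝ → ℝ≥0∞, AEMeasurable g (mu d₁) →
      ∫⁻ x, (∫⁻ y, ‖kernel d₂ x y‖ₑ * g y ∂mu d₁) ^ p ∂mu d₂ ≤
        ENNReal.ofReal C * ∫⁻ y, g y ^ p ∂mu d₁ := by
  obtain ⟨β, hβ₁, hβ₂, hα₀, hα₁⟩ := exists_schur_exponent hd₁ hp hp'
  have hpq := Real.HolderConjugate.conjExponent hp
  set q := p.conjExponent
  set a := β / q
  have hq : 0 < q := hpq.symm.pos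
  have haq : a * q = β := div_mul_cancel₀ β hq.ne'
  have hap : a * p = β * (p - 1) := by
    rw [← haq, mul_assoc, mul_comm q, hpq.sub_one_mul_conj]
  set φ : ℝ → ℝ≥0∞ := fun t => ENNReal.ofReal (t ^ (-a))
  have hφ_rpow : ∀ r ≥ 0, ∀ t ≥ 1, φ t ^ r = ENNReal.ofReal (t ^ (-(a * r))) := fun r hr t ht => by
    rw [ENNReal.ofReal_rpow_of_nonneg (by positivity) hr, ← Real.rpow_mul (by linarith), neg_mul]
  have hφ0 : ∀ᵐ y ∂mu d₁, φ y ≠ 0 := by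
    filter_upwards [ae_one_le_mu d₁] with y hy
    exact (ENNReal.ofReal_pos.mpr (Real.rpow_pos_of_pos (by linarith) _)).ne'
  set A := 1 / (d₁ - β) + 1 / (β - (d₁ - 1))
  set B := 1 / (1 - β * (p - 1)) + 1 / (β * (p - 1))
  have hA : 0 < A := add_pos (one_div_pos.mpr (by linarith)) (one_div_pos.mpr (by linarith))
  have hB : 0 < B := add_pos (one_div_pos.mpr (by linarith)) (one_div_pos.mpr hα₀)
  have hrow : ∀ᵐ x ∂mu d₂,
      ∫⁻ y, ‖kernel d₂ x y‖ₑ * φ y ^ q ∂mu d₁ ≤ ENNReal.ofReal A * φ x ^ q := by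
    filter_upwards [ae_one_le_mu d₂] with x hx
    rw [lintegral_mu_congr fun y hy => by rw [hφ_rpow q hq.le y hy], hφ_rpow q hq.le x hx, haq,
      ← ENNReal.ofReal_mul hA.le]
    exact lintegral_kernel_dy_le hd hβ₁ hβ₂ hx
  have hcol : ∀ᵐ y ∂mu d₁,
      ∫⁻ x, ‖kernel d₂ x y‖ₑ * φ x ^ p ∂mu d₂ ≤ ENNReal.ofReal B * φ y ^ p := by
    filter_upwards [ae_one_le_mu d₁] with y hy
    rw [lintegral_mu_congr fun x hx => by rw [hφ_rpow p (by linarith) x hx],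
      hφ_rpow p (by linarith) y hy, hap, ← ENNReal.ofReal_mul hB.le]
    exact lintegral_kernel_dx_le hα₀ hα₁ hy
  refine ⟨A ^ (p - 1) * B, by positivity, fun g hg => ?_⟩
  calc _ ≤ ENNReal.ofReal A ^ (p - 1) * ENNReal.ofReal B * ∫⁻ y, g y ^ p ∂mu d₁ :=
        lintegral_rpow_lintegral_le_of_schur hpq (measurable_enorm_kernel d₂) (by fun_prop)
          (by fun_prop) hφ0 (ae_of_all _ fun _ => ENNReal.ofReal_ne_top) hrow hcol hg
    _ = _ := by
        rw [ENNReal.ofReal_rpow_of_nonneg hA.le (by linarith), ← ENNReal.ofReal_mul (by positivity)]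

/-- For `1 < d₁ < 2 < d₂`, the integral operator with kernel
`K(x,y) = x^{1-d₂} y^{-1}` for `x ≤ y` and `x^{-d₂}` for `x > y`
is bounded from `L^p([1,∞), μ_{d₁})` to `L^p([1,∞), μ_{d₂})` for
`1 < p < d₁' = d₁/(d₁-1)`. -/
theorem IV1_Lp_bounded
    (d₁ d₂ p : ℝ) (hd₁ : 1 < d₁) (hd₁2 : d₁ < 2) (hd₂ : 2 < d₂)
    (hp1 : 1 < p) (hp2 : p < d₁ / (d₁ - 1)) :
    ∃ C > 0, ∀ f : ℝ → ℝ, MemLp f (ENNReal.ofReal p) (mu d₁) →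
      eLpNorm (fun x => ∫ y in Ici (1 : ℝ),
          (if x ≤ y then x ^ (1 - d₂) * y ^ (-1 : ℝ) else x ^ (-d₂)) * f y * y ^ (d₁ - 1))
        (ENNReal.ofReal p) (mu d₂) ≤
      ENNReal.ofReal C * eLpNorm f (ENNReal.ofReal p) (mu d₁) := by
  obtain ⟨C, hC, hT⟩ := exists_lintegral_kernel_rpow_le hd₁ (hd₁2.trans hd₂).le hp1 hp2
  have hp : 0 < p := by linarith
  refine ⟨C ^ (1 / p), by positivity, fun f hf => ?_⟩
  have hp0 : ENNReal.ofReal p ≠ 0 := (ENNReal.ofReal_pos.mpr hp).ne'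
  rw [eLpNorm_eq_lintegral_rpow_enorm_toReal hp0 ENNReal.ofReal_ne_top,
    eLpNorm_eq_lintegral_rpow_enorm_toReal hp0 ENNReal.ofReal_ne_top, ENNReal.toReal_ofReal hp.le]
  calc _ ≤ (∫⁻ x, (∫⁻ y, ‖kernel d₂ x y‖ₑ * ‖f y‖ₑ ∂mu d₁) ^ p ∂mu d₂) ^ (1 / p) := by
        gcongr with x
        exact enorm_setIntegral_Ici_le_lintegral_mu d₁ (kernel d₂ x) f
    _ ≤ (ENNReal.ofReal C * ∫⁻ y, ‖f y‖ₑ ^ p ∂mu d₁) ^ (1 / p) := by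
        gcongr
        exact hT _ hf.1.enorm
    _ = _ := by
        rw [ENNReal.mul_rpow_of_nonneg _ _ (by positivity),
          ENNReal.ofReal_rpow_of_nonneg hC.le (by positivity)]
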